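/- Let G be a locally finite graph with gradient operator Γ(f)(x) = Σ_{y∼x} (f(y)−f(x))². For nonnegative weights c_i and nonnegative functions f_i : V(G) → ℝ (finite index set), Γ(√(Σ_i c_i f_i)) ≤ Σ_i c_i Γ(√f_i) pointwise. -/
import Mathlib


/-- The graph gradient operator `Γ(f)(x) = ∑_{y ∼ x} (f y - f x)^2`. -/
noncomputable def graphGamma {V : Type*} (G : SimpleGraph V) [G.LocallyFinite]
    (f : V → ℝ) (x : V) : ℝ :=
  ∑ y ∈ G.neighborFinset x, (f y - f x) ^ 2

lemma key_sqrt_ineq {ι : Type*} [Fintype ι] (c a b : ι → ℝ)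
    (hc : ∀ i, 0 ≤ c i) (ha : ∀ i, 0 ≤ a i) (hb : ∀ i, 0 ≤ b i) :
    (Real.sqrt (∑ i, c i * a i) - Real.sqrt (∑ i, c i * b i)) ^ 2
      ≤ ∑ i, c i * (Real.sqrt (a i) - Real.sqrt (b i)) ^ 2 := by
  have hA : 0 ≤ ∑ i, c i * a i :=
    Finset.sum_nonneg fun i _ => mul_nonneg (hc i) (ha i)
  have hB : 0 ≤ ∑ i, c i * b i :=
    Finset.sum_nonneg fun i _ => mul_nonneg (hc i) (hb i)
  have cs : ∑ i, Real.sqrt (c i * a i) * Real.sqrt (c i * b i)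
      ≤ Real.sqrt (∑ i, c i * a i) * Real.sqrt (∑ i, c i * b i) := by
    have h := Finset.sum_mul_sq_le_sq_mul_sq (Finset.univ : Finset ι)
      (fun i => Real.sqrt (c i * a i)) (fun i => Real.sqrt (c i * b i))
    simp only [Real.sq_sqrt (mul_nonneg (hc _) (ha _)),
      Real.sq_sqrt (mul_nonneg (hc _) (hb _))] at h
    have hnn : 0 ≤ ∑ i, Real.sqrt (c i * a i) * Real.sqrt (c i * b i) :=
      Finset.sum_nonneg fun i _ => mul_nonneg (Real.sqrt_nonneg _) (Real.sqrt_nonneg _)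
    calc ∑ i, Real.sqrt (c i * a i) * Real.sqrt (c i * b i)
        = Real.sqrt ((∑ i, Real.sqrt (c i * a i) * Real.sqrt (c i * b i)) ^ 2) := by
          rw [Real.sqrt_sq hnn]
      _ ≤ Real.sqrt ((∑ i, c i * a i) * (∑ i, c i * b i)) := Real.sqrt_le_sqrt h
      _ = Real.sqrt (∑ i, c i * a i) * Real.sqrt (∑ i, c i * b i) := Real.sqrt_mul hA _
  have expand : ∀ i, c i * (Real.sqrt (a i) - Real.sqrt (b i)) ^ 2
      = c i * a i + c i * b i - 2 * (Real.sqrt (c i * a i) * Real.sqrt (c i * b i)) := by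
    intro i
    have h1 : Real.sqrt (c i * a i) * Real.sqrt (c i * b i)
        = c i * (Real.sqrt (a i) * Real.sqrt (b i)) := by
      rw [Real.sqrt_mul (hc i), Real.sqrt_mul (hc i)]
      linear_combination Real.sqrt (a i) * Real.sqrt (b i) * Real.sq_sqrt (hc i)
    rw [h1]
    have ha' := Real.sq_sqrt (ha i)
    have hb' := Real.sq_sqrt (hb i)
    linear_combination c i * ha' + c i * hb'
  rw [Finset.sum_congr rfl (fun i _ => expand i)]
  have hsq : Real.sqrt (∑ i, c i * a i) ^ 2 = ∑ i, c i * a i := Real.sq_sqrt hA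
  have hsq' : Real.sqrt (∑ i, c i * b i) ^ 2 = ∑ i, c i * b i := Real.sq_sqrt hB
  rw [Finset.sum_sub_distrib, Finset.sum_add_distrib, ← Finset.mul_sum]
  nlinarith

theorem stmt_1 {V : Type*} (G : SimpleGraph V) [G.LocallyFinite]
    {ι : Type*} [Fintype ι] (c : ι → ℝ) (f : ι → V → ℝ)
    (hc : ∀ i, 0 ≤ c i) (hf : ∀ i x, 0 ≤ f i x) (x : V) :
    graphGamma G (fun y => Real.sqrt (∑ i, c i * f i y)) x
      ≤ ∑ i, c i * graphGamma G (fun y => Real.sqrt (f i y)) x := by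
  unfold graphGamma
  calc ∑ y ∈ G.neighborFinset x,
        (Real.sqrt (∑ i, c i * f i y) - Real.sqrt (∑ i, c i * f i x)) ^ 2
      ≤ ∑ y ∈ G.neighborFinset x, ∑ i, c i * (Real.sqrt (f i y) - Real.sqrt (f i x)) ^ 2 :=
        Finset.sum_le_sum fun y _ =>
          key_sqrt_ineq c (fun i => f i y) (fun i => f i x) hc
            (fun i => hf i y) (fun i => hf i x)
    _ = ∑ i, c i * ∑ y ∈ G.neighborFinset x, (Real.sqrt (f i y) - Real.sqrt (f i x)) ^ 2 := by
        rw [Finset.sum_comm]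
        simp [Finset.mul_sum]
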